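/- Let (X, ρ) be a metric space, λ ∈ Δ∞, and x = (x_k)_{k∈ℕ} a sequence in X. Let C be a compact subset of X such that C ∩ Γ_x(λ) = ∅, where Γ_x(λ) is the set of λ-statistical cluster points of x. Then the set G = {k ∈ ℕ : x_k ∈ C} has λ-density zero. (This is the paper's Theorem 4.5, specialized to the PM space induced by a metric, where F_{xy} = ε_{ρ(x,y)} and the strong topology is the metric topology.) -/

import Mathlib

/-!
Each point `Y` of `C` fails to be a `λ`-statistical cluster point, so some ball around `Y` meets
the sequence only on a set of `λ`-density zero. Finitely many of these balls cover the compact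
set `C`, and sets of `λ`-density zero are closed under finite unions and subsets.
-/

open Filter Topology

/-- `l` belongs to the class `Δ∞`: a nondecreasing (for indices `≥ 1`) sequence of
positive reals tending to `∞` with `l 1 = 1` and `l (n+1) ≤ l n + 1`. -/
def DeltaInfty (l : ℕ → ℝ) : Prop :=
  (∀ n, 1 ≤ n → 0 < l n) ∧ (∀ m n, 1 ≤ m → m ≤ n → l m ≤ l n) ∧
    Tendsto l atTop atTop ∧ l 1 = 1 ∧ ∀ n, 1 ≤ n → l (n + 1) ≤ l n + 1

open Classical in
/-- The number of elements of `M` in the window `I_n = [n - l n + 1, n] ∩ ℕ`. -/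
noncomputable def lamCount (l : ℕ → ℝ) (M : Set ℕ) (n : ℕ) : ℕ :=
  ((Finset.Icc 1 n).filter (fun (k : ℕ) => ((n : ℝ) - l n + 1 ≤ (k : ℝ)) ∧ k ∈ M)).card

/-- `M ⊆ ℕ` has `λ`-density `r`: `|{k ∈ I_n : k ∈ M}| / l n → r`. -/
def lamDensity (l : ℕ → ℝ) (M : Set ℕ) (r : ℝ) : Prop :=
  Tendsto (fun n => (lamCount l M n : ℝ) / l n) atTop (𝓝 r)

/-- `Y` is a `λ`-statistical cluster point of `x`: for every `t > 0` the set
`{k : dist (x k) Y < t}` does not have `λ`-density zero. -/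
def LamStatClusterPt {X : Type*} [MetricSpace X] (l : ℕ → ℝ) (x : ℕ → X) (Y : X) : Prop :=
  ∀ t > 0, ¬ lamDensity l {k | dist (x k) Y < t} 0

section LamCount

variable (l : ℕ → ℝ)

/-- When `l n ≤ 0` the window `[n - l n + 1, n]` is empty. -/
lemma lamCount_eq_zero_of_nonpos (M : Set ℕ) {n : ℕ} (hn : l n ≤ 0) : lamCount l M n = 0 := by
  classical
  refine Finset.card_eq_zero.mpr (Finset.filter_eq_empty_iff.mpr fun k hk hwin => ?_)
  have hkn : (k : ℝ) ≤ n := by exact_mod_cast (Finset.mem_Icc.mp hk).2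
  linarith [hwin.1]

lemma lamCount_div_nonneg (M : Set ℕ) (n : ℕ) : 0 ≤ (lamCount l M n : ℝ) / l n := by
  rcases le_or_gt (l n) 0 with hn | hn
  · simp [lamCount_eq_zero_of_nonpos l M hn]
  · positivity

lemma lamCount_mono {M N : Set ℕ} (h : M ⊆ N) (n : ℕ) : lamCount l M n ≤ lamCount l N n := by
  classical
  exact Finset.card_le_card <| Finset.monotone_filter_right _ fun k _ hk => ⟨hk.1, h hk.2⟩

lemma lamCount_union_le (M N : Set ℕ) (n : ℕ) :
    lamCount l (M ∪ N) n ≤ lamCount l M n + lamCount l N n := by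
  classical
  refine (Finset.card_le_card fun k hk => ?_).trans (Finset.card_union_le _ _)
  simp only [Finset.mem_filter, Finset.mem_union, Set.mem_union] at hk ⊢
  tauto

lemma lamCount_biUnion_le {ι : Type*} (s : Finset ι) (M : ι → Set ℕ) (n : ℕ) :
    lamCount l (⋃ i ∈ s, M i) n ≤ ∑ i ∈ s, lamCount l (M i) n := by
  classical
  induction s using Finset.induction with
  | empty => simp [lamCount]
  | insert a s ha ih =>
    rw [Finset.sum_insert ha, Finset.set_biUnion_insert]
    exact (lamCount_union_le l _ _ n).trans (Nat.add_le_add_left ih _)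

lemma lamCount_div_le_sum {ι : Type*} {M : Set ℕ} (s : Finset ι) {N : ι → Set ℕ}
    (hM : M ⊆ ⋃ i ∈ s, N i) (n : ℕ) :
    (lamCount l M n : ℝ) / l n ≤ ∑ i ∈ s, (lamCount l (N i) n : ℝ) / l n := by
  rw [← Finset.sum_div]
  rcases le_or_gt (l n) 0 with hn | hn
  · simp [lamCount_eq_zero_of_nonpos l _ hn]
  · gcongr
    exact_mod_cast (lamCount_mono l hM n).trans (lamCount_biUnion_le l s N n)

end LamCount

lemma lamDensity_zero_of_subset_biUnion {l : ℕ → ℝ} {ι : Type*} {M : Set ℕ} (s : Finset ι)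
    {N : ι → Set ℕ} (hM : M ⊆ ⋃ i ∈ s, N i) (hN : ∀ i ∈ s, lamDensity l (N i) 0) :
    lamDensity l M 0 := by
  have hsum : Tendsto (fun n => ∑ i ∈ s, (lamCount l (N i) n : ℝ) / l n) atTop (𝓝 0) := by
    simpa using tendsto_finsetSum s hN
  exact squeeze_zero (lamCount_div_nonneg l M) (lamCount_div_le_sum l s hM) hsum

lemma not_lamStatClusterPt_iff {X : Type*} [MetricSpace X] {l : ℕ → ℝ} {x : ℕ → X} {Y : X} :
    ¬ LamStatClusterPt l x Y ↔ ∃ t > 0, lamDensity l {k | dist (x k) Y < t} 0 := by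
  simp [LamStatClusterPt]

theorem lamDensity_zero_of_compact_disjoint_clusterPts_general {X : Type*} [MetricSpace X]
    (l : ℕ → ℝ) (x : ℕ → X) (C : Set X)
    (hC : IsCompact C) (hdisj : C ∩ {Y | LamStatClusterPt l x Y} = ∅) :
    lamDensity l {k | x k ∈ C} 0 := by
  have hball : ∀ Y ∈ C, ∃ t > 0, lamDensity l {k | dist (x k) Y < t} 0 := fun Y hY =>
    not_lamStatClusterPt_iff.mp fun hY' => Set.eq_empty_iff_forall_notMem.mp hdisj Y ⟨hY, hY'⟩
  choose! t ht hden using hball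
  obtain ⟨s, hsC, hcover⟩ := hC.elim_nhds_subcover (fun Y => Metric.ball Y (t Y))
    fun Y hY => Metric.ball_mem_nhds Y (ht Y hY)
  refine lamDensity_zero_of_subset_biUnion s (fun k hk => ?_) fun Y hY => hden Y (hsC Y hY)
  simpa only [Set.mem_iUnion, Set.mem_ofPred_eq, Metric.mem_ball] using hcover hk

theorem lamDensity_zero_of_compact_disjoint_clusterPts {X : Type*} [MetricSpace X]
    (l : ℕ → ℝ) (hl : DeltaInfty l) (x : ℕ → X) (C : Set X)
    (hC : IsCompact C) (hdisj : C ∩ {Y | LamStatClusterPt l x Y} = ∅) :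
    lamDensity l {k | x k ∈ C} 0 :=
  lamDensity_zero_of_compact_disjoint_clusterPts_general l x C hC hdisj
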